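/- arXiv:1407.4286 — 3 statements merged into one kernel-verified Lean document; each statement's English description precedes it below -/
import Mathlib

section
/- For every n ≥ 2 there exist binary strings s₁, …, sₙ ∈ {0,1}ⁿ, each of length n, such that every SLP G over the alphabet {0,1} that contains nonterminals A₁, …, Aₙ with val_G(Aᵢ) = sᵢ for all 1 ≤ i ≤ n has size |G| > n²/(2·log₂(n) + 1) − n − 1. In particular, every concatenation circuit computing the set {s₁, …, sₙ} has size Ω(n²/log n). -/
/-- A straight-line program (SLP) over the terminal alphabet `α`:  a context-free
grammar with nonterminals `Fin N`, a start nonterminal, exactly one rule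
`A → rhs A` per nonterminal `A` (with `rhs A` a word over nonterminals and
terminals), such that the relation "`B` occurs in the right-hand side of `A`"
is acyclic (equivalently, it admits a strictly decreasing ranking). -/
structure SLP (α : Type) where
  N : ℕ
  start : Fin N
  rhs : Fin N → List (Fin N ⊕ α)
  acyclic : ∃ ord : Fin N → ℕ, ∀ A B : Fin N, Sum.inl B ∈ rhs A → ord B < ord A

namespace SLP

/-- Fuel-based expansion of a nonterminal. -/
def valFuel {α : Type} (G : SLP α) : ℕ → Fin G.N → List α
  | 0, _ => []
  | fuel+1, A =>
      ((G.rhs A).map (fun s =>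
        match s with
        | Sum.inl B => G.valFuel fuel B
        | Sum.inr a => [a])).flatten

/-- The word derived from nonterminal `A`.  By acyclicity, any chain of nested
nonterminal occurrences has length at most `G.N`, so fuel `G.N` fully expands
every nonterminal. -/
def val {α : Type} (G : SLP α) (A : Fin G.N) : List α := G.valFuel G.N A

/-- The size of an SLP: the total length of all right-hand sides. -/
def size {α : Type} (G : SLP α) : ℕ := ∑ A : Fin G.N, (G.rhs A).length

end SLP

/-!
Counting argument. An SLP of size at most `m` can be normalised to at most `m` nonempty rules of
total length exactly `m` (drop the empty rules, whose nonterminals derive the empty word, and pad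
with singleton rules). Such a grammar is described by a composition of `m` (the rule lengths)
and a word of length `m` over the `m + 3` symbols `Fin (m + 1) ⊕ Bool`, so SLPs of size at most
`m` derive at most `2 ^ m * (m + 3) ^ m * (m + 1) ^ n` different `n`-tuples of words. When
`m ≤ n² / (2 log₂ n + 1) - n - 1` this is less than the number `2 ^ (n * n)` of `n`-tuples of
binary words of length `n`.
-/

open Finset

namespace SLP

variable {ι κ : Type*} {α : Type}

/-- `SLP.valFuel` for an arbitrary, possibly cyclic, system of rules: decoded codes below need not
be acyclic. -/
def expand (R : ι → List (ι ⊕ α)) : ℕ → ι → List α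
  | 0, _ => []
  | f + 1, i => (R i).flatMap (Sum.elim (expand R f) fun a => [a])

theorem valFuel_eq_expand (G : SLP α) : G.valFuel = expand G.rhs := by
  funext f A
  induction f generalizing A with
  | zero => rfl
  | succ f ih =>
    simp only [valFuel, expand, List.flatMap, ih]
    congr 2
    funext s
    cases s <;> rfl

theorem expand_of_eq_nil {R : ι → List (ι ⊕ α)} {i : ι} (h : R i = []) (f : ℕ) :
    expand R f i = [] := by
  cases f <;> simp [expand, h]

theorem expand_comp {R : ι → List (ι ⊕ α)} {R' : κ → List (κ ⊕ α)} {φ : ι → κ}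
    (h : ∀ i, R' (φ i) = (R i).map (Sum.map φ id)) (f : ℕ) (i : ι) :
    expand R' f (φ i) = expand R f i := by
  induction f generalizing i with
  | zero => rfl
  | succ f ih =>
    simp only [expand, h, List.flatMap_map]
    congr 1
    funext s
    cases s <;> simp [ih]

section Rank

variable [Fintype ι] (R : ι → List (ι ⊕ α)) (ord : ι → ℕ)

/-- Only nonterminals with a nonempty rule are counted, so that the rank is bounded both by the
number of nonterminals and by the total size of the rules. -/
def rank (i : ι) : ℕ := #{j | R j ≠ [] ∧ ord j ≤ ord i}

variable {R ord}

theorem rank_pos {i : ι} (hi : R i ≠ []) : 0 < rank R ord i :=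
  card_pos.2 ⟨i, by simp [hi]⟩

theorem rank_lt_rank (hord : ∀ i j, Sum.inl j ∈ R i → ord j < ord i) {i j : ι}
    (hj : Sum.inl j ∈ R i) : rank R ord j < rank R ord i := by
  have hij := hord i j hj
  refine card_lt_card ((ssubset_iff_of_subset fun k hk => ?_).2 ⟨i, ?_, ?_⟩)
  · simp only [mem_filter, mem_univ, true_and] at hk ⊢
    exact ⟨hk.1, by omega⟩
  · simp [List.ne_nil_of_mem hj]
  · simp only [mem_filter, mem_univ, true_and, not_and, not_le]
    exact fun _ => hij

theorem rank_le_card (i : ι) : rank R ord i ≤ Fintype.card ι :=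
  card_le_univ _

theorem rank_le_sum_length (i : ι) : rank R ord i ≤ ∑ j, (R j).length :=
  calc rank R ord i = ∑ _ ∈ {j | R j ≠ [] ∧ ord j ≤ ord i}, 1 := card_eq_sum_ones _
    _ ≤ ∑ j ∈ {j | R j ≠ [] ∧ ord j ≤ ord i}, (R j).length :=
        sum_le_sum fun _ hj => List.length_pos_of_ne_nil (mem_filter.1 hj).2.1
    _ ≤ ∑ j, (R j).length := sum_le_univ_sum_of_nonneg fun _ => Nat.zero_le _

theorem expand_eq_expand_of_rank_le (hord : ∀ i j, Sum.inl j ∈ R i → ord j < ord i)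
    {f f' : ℕ} {i : ι} (hf : rank R ord i ≤ f) (hf' : rank R ord i ≤ f') :
    expand R f i = expand R f' i := by
  by_cases hi : R i = []
  · rw [expand_of_eq_nil hi, expand_of_eq_nil hi]
  obtain ⟨f, rfl⟩ := Nat.exists_eq_add_one.2 ((rank_pos hi).trans_le hf)
  obtain ⟨f', rfl⟩ := Nat.exists_eq_add_one.2 ((rank_pos hi).trans_le hf')
  refine List.flatMap_congr fun s hs => ?_
  cases s with
  | inl j =>
    have := rank_lt_rank hord hs
    exact expand_eq_expand_of_rank_le hord (by omega) (by omega)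
  | inr _ => rfl
termination_by rank R ord i

end Rank

theorem expand_rhs_eq_val (G : SLP α) {f : ℕ} (hf : G.size ≤ f) (A : Fin G.N) :
    expand G.rhs f A = G.val A := by
  obtain ⟨ord, hord⟩ := G.acyclic
  rw [val, valFuel_eq_expand]
  exact expand_eq_expand_of_rank_le hord ((rank_le_sum_length A).trans hf)
    ((rank_le_card A).trans (Fintype.card_fin _).le)

/-- A grammar with nonterminals `Fin (m + 1)` and rules of total length `m`, none of them empty:
the concatenation of the rules, cut along a composition of `m`. Nonterminals beyond the number
of blocks, in particular `Fin.last m`, get the empty rule. -/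
abbrev Code (α : Type) (m : ℕ) := Composition m × List.Vector (Fin (m + 1) ⊕ α) m

namespace Code

variable {m : ℕ}

def rules (c : Code α m) (j : Fin (m + 1)) : List (Fin (m + 1) ⊕ α) :=
  (c.2.toList.splitWrtComposition c.1).getD j []

theorem card [Fintype α] :
    Fintype.card (Code α m) = 2 ^ (m - 1) * (m + 1 + Fintype.card α) ^ m := by
  simp [composition_card, card_vector]

theorem exists_rules_eq (Rs : List (List (Fin (m + 1) ⊕ α))) (hne : ∀ r ∈ Rs, r ≠ [])
    (hsum : (Rs.map List.length).sum = m) : ∃ c : Code α m, ∀ j, c.rules j = Rs.getD j [] := by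
  have hpos : ∀ {k}, k ∈ Rs.map List.length → 0 < k := by
    simp only [List.mem_map]
    rintro _ ⟨r, hr, rfl⟩
    exact List.length_pos_of_ne_nil (hne r hr)
  refine ⟨(⟨_, hpos, hsum⟩, ⟨Rs.flatten, by simp [hsum]⟩), fun j => ?_⟩
  exact congrArg (List.getD · j [])
      (List.splitWrtComposition_flatten Rs ⟨_, hpos, List.length_flatten.symm⟩ rfl)

end Code

theorem exists_code (G : SLP α) {m : ℕ} (hm : G.size ≤ m) :
    ∃ (c : Code α m) (φ : Fin G.N → Fin (m + 1)),
      ∀ A, c.rules (φ A) = (G.rhs A).map (Sum.map φ id) := by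
  classical
  let S := {A : Fin G.N // G.rhs A ≠ []}
  let e := Fintype.equivFin S
  have hsum : ∑ A : S, (G.rhs A).length = G.size :=
    calc ∑ A : S, (G.rhs A).length = ∑ A with G.rhs A ≠ [], (G.rhs A).length :=
          (sum_subtype _ mem_filter_univ (fun A => (G.rhs A).length)).symm
      _ = G.size :=
        sum_filter_of_ne fun _ _ h => List.ne_nil_of_length_pos (Nat.pos_of_ne_zero h)
  have hS : Fintype.card S ≤ G.size :=
    calc Fintype.card S = ∑ _ : S, 1 := Fintype.card_eq_sum_ones
      _ ≤ ∑ A : S, (G.rhs A).length := sum_le_sum fun A _ => List.length_pos_of_ne_nil A.2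
      _ = G.size := hsum
  -- Nonterminals with an empty rule all go to `Fin.last m`, whose rule in the code is empty.
  let φ (A : Fin G.N) : Fin (m + 1) :=
    if h : G.rhs A = [] then Fin.last m else Fin.castLE (by omega) (e ⟨A, h⟩)
  let live := List.ofFn fun k => (G.rhs (e.symm k)).map (Sum.map φ id)
  let Rs := live ++ List.replicate (m - G.size) [Sum.inl (Fin.last m)]
  have hlen : Rs.length ≤ m := by
    simp only [Rs, live, List.length_append, List.length_ofFn, List.length_replicate]
    omega
  have hne : ∀ r ∈ Rs, r ≠ [] := by
    simp only [Rs, live, List.mem_append, List.mem_ofFn, List.mem_replicate]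
    rintro r (⟨k, rfl⟩ | ⟨_, rfl⟩)
    · simpa using (e.symm k).2
    · simp
  have hRs : (Rs.map List.length).sum = m := by
    simp only [Rs, live, List.map_append, List.map_ofFn, List.map_replicate, List.sum_append,
      List.sum_ofFn, Function.comp_apply, List.length_map, List.length_singleton,
      e.symm.sum_comp (fun A : S => (G.rhs A).length), hsum, List.sum_replicate, smul_eq_mul,
      mul_one]
    omega
  obtain ⟨c, hc⟩ := Code.exists_rules_eq Rs hne hRs
  refine ⟨c, φ, fun A => ?_⟩
  rw [hc]
  by_cases hA : G.rhs A = []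
  · rw [show φ A = Fin.last m from dif_pos hA, hA, List.map_nil]
    exact List.getD_eq_default _ _ hlen
  · have hk : (e ⟨A, hA⟩ : ℕ) < live.length := by simp [live]
    rw [show φ A = Fin.castLE _ (e ⟨A, hA⟩) from dif_neg hA, Fin.val_castLE,
      List.getD_append _ _ _ _ hk, List.getD_eq_getElem _ _ hk, List.getElem_ofFn,
      Fin.eta, e.symm_apply_apply]

theorem exists_code_expand_eq_val (G : SLP α) {m : ℕ} (hm : G.size ≤ m) :
    ∃ (c : Code α m) (φ : Fin G.N → Fin (m + 1)),
      ∀ A, expand c.rules m (φ A) = G.val A := by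
  obtain ⟨c, φ, hc⟩ := G.exists_code hm
  exact ⟨c, φ, fun A => (expand_comp hc m A).trans (G.expand_rhs_eq_val hm A)⟩

theorem exists_ofFn_ne_expand [Fintype α] {n m : ℕ}
    (hcard : Fintype.card (Code α m) * (m + 1) ^ n < Fintype.card α ^ (n * n)) :
    ∃ g : Fin n → Fin n → α, ∀ (c : Code α m) (p : Fin n → Fin (m + 1)),
      ∃ i, expand c.rules m (p i) ≠ List.ofFn (g i) := by
  by_contra! h
  choose c p hcp using h
  have hinj : Function.Injective fun g => (c g, p g) := by
    intro g g' hgg'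
    obtain ⟨hc, hp⟩ : c g = c g' ∧ p g = p g' := Prod.ext_iff.1 hgg'
    funext i
    apply List.ofFn_injective
    rw [← hcp g i, ← hcp g' i, hc, hp]
  refine hcard.not_ge ?_
  calc Fintype.card α ^ (n * n) = Fintype.card (Fin n → Fin n → α) := by simp [pow_mul]
    _ ≤ Fintype.card (Code α m × (Fin n → Fin (m + 1))) := Fintype.card_le_of_injective _ hinj
    _ = Fintype.card (Code α m) * (m + 1) ^ n := by
      rw [Fintype.card_prod, Fintype.card_fun, Fintype.card_fin, Fintype.card_fin]

end SLP

theorem two_pow_mul_pow_mul_pow_lt {n m : ℕ}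
    (hm : (m : ℝ) ≤ (n : ℝ) ^ 2 / (2 * Real.logb 2 n + 1) - n - 1) :
    2 ^ (m - 1) * (m + 1 + 2) ^ m * (m + 1) ^ n < 2 ^ (n * n) := by
  rcases Nat.eq_zero_or_pos n with rfl | hn
  · norm_num at hm
    linarith [m.cast_nonneg (α := ℝ)]
  set L := Real.logb 2 n
  have hL : 0 ≤ L := Real.logb_nonneg one_lt_two (by exact_mod_cast hn)
  have hmn : ((m : ℝ) + n + 1) * (2 * L + 1) ≤ (n : ℝ) ^ 2 := by
    rw [← le_div_iff₀ (by positivity)]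
    linarith
  have hmn' : m + n + 1 ≤ n ^ 2 := by
    have := (le_mul_of_one_le_right (by positivity) (by linarith)).trans hmn
    exact_mod_cast this
  have hn2 : 2 ≤ n := by nlinarith
  have h2L : (2 : ℝ) ^ L = n := Real.rpow_logb two_pos (by norm_num) (by exact_mod_cast hn)
  calc 2 ^ (m - 1) * (m + 1 + 2) ^ m * (m + 1) ^ n ≤ 2 ^ m * (n ^ 2) ^ m * (n ^ 2) ^ n := by
        gcongr <;> omega
    _ < 2 ^ (n * n) := by
      suffices (2 : ℝ) ^ m * ((n : ℝ) ^ 2) ^ m * ((n : ℝ) ^ 2) ^ n < 2 ^ (n * n) by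
        exact_mod_cast this
      rw [show (2 : ℝ) ^ m * ((n : ℝ) ^ 2) ^ m * ((n : ℝ) ^ 2) ^ n
          = 2 ^ (m : ℝ) * ((2 : ℝ) ^ L) ^ (2 * (m + n)) by rw [Real.rpow_natCast, h2L]; ring,
        ← Real.rpow_mul_natCast zero_le_two, ← Real.rpow_add two_pos,
        ← Real.rpow_natCast 2 (n * n)]
      apply Real.rpow_lt_rpow_of_exponent_lt one_lt_two
      push_cast
      -- `m + 2L(m + n) < (m + n + 1)(2L + 1) ≤ n²`
      linarith

theorem concatenation_circuit_lower_bound_general (n : ℕ) :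
    ∃ s : Fin n → List Bool, (∀ i, (s i).length = n) ∧
      ∀ (G : SLP Bool) (A : Fin n → Fin G.N),
        (∀ i, G.val (A i) = s i) →
        (n : ℝ) ^ 2 / (2 * Real.logb 2 n + 1) - n - 1 < (G.size : ℝ) := by
  set B : ℝ := (n : ℝ) ^ 2 / (2 * Real.logb 2 n + 1) - n - 1
  rcases lt_or_ge B 0 with hB | hB
  · exact ⟨fun _ => List.replicate n false, by simp,
      fun G _ _ => hB.trans_le G.size.cast_nonneg⟩
  obtain ⟨g, hg⟩ := SLP.exists_ofFn_ne_expand (α := Bool) (m := ⌊B⌋₊) <| by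
    rw [SLP.Code.card, Fintype.card_bool]
    exact two_pow_mul_pow_mul_pow_lt (Nat.floor_le hB)
  refine ⟨fun i => List.ofFn (g i), by simp, fun G A hA => ?_⟩
  by_contra! hle
  obtain ⟨c, φ, hc⟩ := G.exists_code_expand_eq_val (Nat.le_floor hle)
  obtain ⟨i, hi⟩ := hg c (φ ∘ A)
  exact hi ((hc (A i)).trans (hA i))

/-- A lower bound for concatenation circuits:  there are `n`
binary strings of length `n` such that every SLP over `{0,1}` containing a
nonterminal deriving each of the strings has size greater than
`n²/(2·log₂ n + 1) − n − 1`. -/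
theorem concatenation_circuit_lower_bound (n : ℕ) (hn : 2 ≤ n) :
    ∃ s : Fin n → List Bool, (∀ i, (s i).length = n) ∧
      ∀ (G : SLP Bool) (A : Fin n → Fin G.N),
        (∀ i, G.val (A i) = s i) →
        (n : ℝ) ^ 2 / (2 * Real.logb 2 n + 1) - n - 1 < (G.size : ℝ) :=
  concatenation_circuit_lower_bound_general n
end

section
/- Let G be a TSLP in Chomsky normal form with derivation tree D and modified derivation tree D*. Let u and v be nodes of D labelled by nonterminals A and B respectively, and let u' and v' be the corresponding nodes of D*. If the subtrees of D* rooted at u' and at v' are isomorphic as labelled ordered trees, then val_G(A) = val_G(B). -/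
universe u v

inductive RTree (L : Type u) : Type u
  | node : L → List (RTree L) → RTree L

namespace RTree

def size {L : Type u} : RTree L → ℕ
  | .node _ ts => 1 + (ts.attach.map (fun x => x.1.size)).sum
termination_by t => sizeOf t
decreasing_by simp_wf; have := List.sizeOf_lt_of_mem x.2; omega

def labelsList {L : Type u} : RTree L → List L
  | .node f ts => f :: (ts.attach.map (fun x => x.1.labelsList)).flatten
termination_by t => sizeOf t
decreasing_by simp_wf; have := List.sizeOf_lt_of_mem x.2; omega

def map {L : Type u} {L' : Type v} (g : L → L') : RTree L → RTree L'
  | .node f ts => .node (g f) (ts.attach.map (fun x => x.1.map g))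
termination_by t => sizeOf t
decreasing_by simp_wf; have := List.sizeOf_lt_of_mem x.2; omega

/-- Number of non-parameter nodes of a tree whose leaves may be labelled with
parameters (the right summand `ℕ` is the set of parameters). -/
def psize {L : Type u} : RTree (L ⊕ ℕ) → ℕ
  | .node (Sum.inl _) ts => 1 + (ts.attach.map (fun x => x.1.psize)).sum
  | .node (Sum.inr _) ts => (ts.attach.map (fun x => x.1.psize)).sum
termination_by t => sizeOf t
decreasing_by all_goals (simp_wf; have := List.sizeOf_lt_of_mem x.2; omega)

/-- The list of parameters occurring in a tree, in depth-first left-to-right order. -/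
def paramList {L : Type u} : RTree (L ⊕ ℕ) → List ℕ
  | .node (Sum.inl _) ts => (ts.attach.map (fun x => x.1.paramList)).flatten
  | .node (Sum.inr i) _ => [i]
termination_by t => sizeOf t
decreasing_by simp_wf; have := List.sizeOf_lt_of_mem x.2; omega

/-- Substitution of trees for parameters. -/
def subst {L : Type u} (g : ℕ → RTree (L ⊕ ℕ)) : RTree (L ⊕ ℕ) → RTree (L ⊕ ℕ)
  | .node (Sum.inl a) ts => .node (Sum.inl a) (ts.attach.map (fun x => x.1.subst g))
  | .node (Sum.inr i) _ => g i
termination_by t => sizeOf t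
decreasing_by simp_wf; have := List.sizeOf_lt_of_mem x.2; omega

/-- The tree consisting of a single node labelled with parameter `i`. -/
def param {L : Type u} (i : ℕ) : RTree (L ⊕ ℕ) := .node (Sum.inr i) []

inductive WF {L : Type u} (rk : L → ℕ) : RTree L → Prop
  | node {f : L} {ts : List (RTree L)} :
      ts.length = rk f → (∀ t ∈ ts, WF rk t) → WF rk (.node f ts)

end RTree


/-- Full binary trees with labelled leaves and labelled inner nodes. -/
inductive BTree (α : Type u) : Type u
  | leaf : α → BTree α
  | node : α → BTree α → BTree α → BTree α

/-- A TSLP in Chomsky normal form over the ranked terminal alphabet `(L, rkL)`.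
Nonterminals are `Fin N`, each of a given rank, parameters are numbered from
`0`.  The rule of a nonterminal `A` of rank `k` either is
`rule A = Sum.inl (B, C, i)`, representing
`A(x₀,…,x_{k−1}) → B(x₀,…,x_{i−1}, C(x_i,…,x_{i+l−1}), x_{i+l},…,x_{k−1})`
(where `l = rkN C`, `rkN B = k − l + 1` and `0 ≤ i < rkN B`; `index(A) = i`),
or is `rule A = Sum.inr f` for a terminal `f` of rank `k`, representing
`A(x₀,…,x_{k−1}) → f(x₀,…,x_{k−1})` (`index(A) = 0`). -/
structure CNFTSLP (L : Type u) (rkL : L → ℕ) where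
  N : ℕ
  rkN : Fin N → ℕ
  start : Fin N
  start_rank : rkN start = 0
  rule : Fin N → (Fin N × Fin N × ℕ) ⊕ L
  wf_nt : ∀ A B C i, rule A = Sum.inl (B, C, i) →
    rkN A + 1 = rkN B + rkN C ∧ i < rkN B
  wf_t : ∀ A f, rule A = Sum.inr f → rkL f = rkN A
  acyclic : ∃ ord : Fin N → ℕ,
    ∀ A B C i, rule A = Sum.inl (B, C, i) → ord B < ord A ∧ ord C < ord A

namespace CNFTSLP

variable {L : Type u} {rkL : L → ℕ}

/-- Fuel-based evaluation of a nonterminal. -/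
def valFuel (G : CNFTSLP L rkL) : ℕ → Fin G.N → RTree (L ⊕ ℕ)
  | 0, _ => RTree.param 0
  | fuel+1, A =>
    match G.rule A with
    | Sum.inr f => .node (Sum.inl f) ((List.range (rkL f)).map RTree.param)
    | Sum.inl (B, C, i) =>
        RTree.subst (fun j =>
          if j < i then RTree.param j
          else if j = i then
            RTree.subst (fun j' => RTree.param (j' + i)) (G.valFuel fuel C)
          else RTree.param (j + G.rkN C - 1))
          (G.valFuel fuel B)

/-- The valid pattern derived from nonterminal `A`.  By acyclicity, fuel `G.N`
fully expands every nonterminal. -/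
def valN (G : CNFTSLP L rkL) (A : Fin G.N) : RTree (L ⊕ ℕ) := G.valFuel G.N A

/-- The tree derived from the start nonterminal. -/
def val (G : CNFTSLP L rkL) : RTree (L ⊕ ℕ) := G.valN G.start

/-- The size of a TSLP in Chomsky normal form: a rule `A → B(… C(…) …)`
contributes `2`, a rule `A → f(…)` contributes `1`. -/
def size (G : CNFTSLP L rkL) : ℕ :=
  ∑ A : Fin G.N, (match G.rule A with | Sum.inl _ => 2 | Sum.inr _ => 1)

/-- Fuel-based depth of the derivation tree below a nonterminal: a node
labelled `A` with `rule A = Sum.inl (B, C, i)` has a left subtree for `B` and a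
right subtree for `C`; a node labelled `A` with `rule A = Sum.inr f` has a
single leaf child labelled `f`. -/
def ddepthFuel (G : CNFTSLP L rkL) : ℕ → Fin G.N → ℕ
  | 0, _ => 0
  | fuel+1, A =>
    match G.rule A with
    | Sum.inr _ => 1
    | Sum.inl (B, C, _) => 1 + max (G.ddepthFuel fuel B) (G.ddepthFuel fuel C)

/-- The depth of the derivation tree of a TSLP in Chomsky normal form. -/
def depth (G : CNFTSLP L rkL) : ℕ := G.ddepthFuel G.N G.start

/-- Fuel-based modified derivation tree below a nonterminal: an inner node of
the derivation tree whose children are inner nodes is relabelled by the index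
of its nonterminal, the leaves of the derivation tree are deleted and their
labels are written into their parent nodes. -/
def mdtFuel (G : CNFTSLP L rkL) : ℕ → Fin G.N → BTree (ℕ ⊕ L)
  | 0, _ => .leaf (Sum.inl 0)
  | fuel+1, A =>
    match G.rule A with
    | Sum.inr f => .leaf (Sum.inr f)
    | Sum.inl (B, C, i) => .node (Sum.inl i) (G.mdtFuel fuel B) (G.mdtFuel fuel C)

/-- The subtree of the modified derivation tree rooted at (a node corresponding
to) the nonterminal `A`. -/
def mdt (G : CNFTSLP L rkL) (A : Fin G.N) : BTree (ℕ ⊕ L) := G.mdtFuel G.N A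

/-- The nonterminals labelling nodes of the derivation tree. -/
inductive Reachable (G : CNFTSLP L rkL) : Fin G.N → Prop
  | start : Reachable G G.start
  | left {A B C i} : Reachable G A → G.rule A = Sum.inl (B, C, i) → Reachable G B
  | right {A B C i} : Reachable G A → G.rule A = Sum.inl (B, C, i) → Reachable G C

end CNFTSLP

section Aux

variable {L : Type} {rkL : L → ℕ}

/-- `A` is fully expanded within `n` units of fuel. -/
inductive Complete (G : CNFTSLP L rkL) : ℕ → Fin G.N → Prop
  | term {n A f} : G.rule A = Sum.inr f → Complete G (n+1) A
  | nt {n A B C i} : G.rule A = Sum.inl (B, C, i) →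
      Complete G n B → Complete G n C → Complete G (n+1) A

theorem Complete.mono {G : CNFTSLP L rkL} {n m : ℕ} {A : Fin G.N}
    (h : Complete G n A) (hle : n ≤ m) : Complete G m A := by
  induction h generalizing m with
  | term hr =>
    rename_i n A f
    obtain ⟨m, rfl⟩ := Nat.exists_eq_add_of_le hle
    have : n + 1 + m = (n + m) + 1 := by omega
    rw [this]
    exact .term hr
  | nt hr hB hC ihB ihC =>
    rename_i n A B C i
    obtain ⟨k, rfl⟩ := Nat.exists_eq_add_of_le hle
    have : n + 1 + k = (n + k) + 1 := by omega
    rw [this]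
    exact .nt hr (ihB (by omega)) (ihC (by omega))

theorem complete_card {G : CNFTSLP L rkL} (ord : Fin G.N → ℕ)
    (hord : ∀ A B C i, G.rule A = Sum.inl (B, C, i) → ord B < ord A ∧ ord C < ord A)
    (A : Fin G.N) :
    Complete G (1 + (Finset.univ.filter (fun B => ord B < ord A)).card) A := by
  generalize hw : ord A = k
  induction k using Nat.strong_induction_on generalizing A with
  | _ k ih =>
  subst hw
  rw [Nat.add_comm]
  rcases hr : G.rule A with ⟨B, C, i⟩ | f
  · obtain ⟨hB, hC⟩ := hord A B C i hr
    have key : ∀ X : Fin G.N, ord X < ord A →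
        Complete G ((Finset.univ.filter (fun Y => ord Y < ord A)).card) X := by
      intro X hX
      have h1 := ih (ord X) hX X rfl
      refine h1.mono ?_
      have hsub : (Finset.univ.filter (fun Y => ord Y < ord X)) ⊆
          (Finset.univ.filter (fun Y => ord Y < ord A)) \ {X} := by
        intro Y hY
        simp only [Finset.mem_filter, Finset.mem_sdiff, Finset.mem_singleton,
          Finset.mem_univ, true_and] at hY ⊢
        exact ⟨hY.trans hX, fun hYX => by simp [hYX] at hY⟩
      have hX' : X ∈ Finset.univ.filter (fun Y => ord Y < ord A) := by
        simp [hX]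
      have := Finset.card_le_card hsub
      rw [Finset.card_sdiff_of_subset (by simpa using hX')] at this
      simp only [Finset.card_singleton] at this
      have hpos : 0 < (Finset.univ.filter (fun Y => ord Y < ord A)).card :=
        Finset.card_pos.mpr ⟨X, hX'⟩
      omega
    exact .nt hr (key B hB) (key C hC)
  · exact .term hr

theorem complete_N {G : CNFTSLP L rkL} (A : Fin G.N) : Complete G G.N A := by
  obtain ⟨ord, hord⟩ := G.acyclic
  refine (complete_card ord (fun A B C i h => hord A B C i h) A).mono ?_
  have hA : A ∉ Finset.univ.filter (fun B => ord B < ord A) := by simp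
  have h1 : (Finset.univ.filter (fun B => ord B < ord A)).card <
      (Finset.univ : Finset (Fin G.N)).card :=
    Finset.card_lt_card (Finset.ssubset_iff_of_subset (Finset.filter_subset _ _)
      |>.mpr ⟨A, Finset.mem_univ A, by simp⟩)
  simp only [Finset.card_univ, Fintype.card_fin] at h1
  omega

theorem main_aux {G : CNFTSLP L rkL} (n : ℕ) :
    ∀ A B : Fin G.N, Complete G n A → Complete G n B →
      G.mdtFuel n A = G.mdtFuel n B →
      G.rkN A = G.rkN B ∧ G.valFuel n A = G.valFuel n B := by
  induction n with
  | zero => intro A B hA; cases hA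
  | succ n ih =>
    intro A B hA hB hmdt
    rcases hrA : G.rule A with ⟨B1, C1, i1⟩ | f1 <;>
      rcases hrB : G.rule B with ⟨B2, C2, i2⟩ | f2 <;>
      simp only [CNFTSLP.mdtFuel, hrA, hrB] at hmdt
    · -- both inl
      injection hmdt with h1 h2 h3
      injection h1 with h1
      subst h1
      have hCA : Complete G n B1 ∧ Complete G n C1 := by
        cases hA with
        | term hr => rw [hrA] at hr; cases hr
        | nt hr hB' hC' =>
          rw [hrA] at hr; injection hr with hr
          obtain ⟨rfl, rfl, rfl⟩ : _ ∧ _ ∧ _ := by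
            injection hr with a b; injection b with b c; exact ⟨a, b, c⟩
          exact ⟨hB', hC'⟩
      have hCB : Complete G n B2 ∧ Complete G n C2 := by
        cases hB with
        | term hr => rw [hrB] at hr; cases hr
        | nt hr hB' hC' =>
          rw [hrB] at hr; injection hr with hr
          obtain ⟨rfl, rfl, rfl⟩ : _ ∧ _ ∧ _ := by
            injection hr with a b; injection b with b c; exact ⟨a, b, c⟩
          exact ⟨hB', hC'⟩
      obtain ⟨hrk1, hval1⟩ := ih B1 B2 hCA.1 hCB.1 h2
      obtain ⟨hrk2, hval2⟩ := ih C1 C2 hCA.2 hCB.2 h3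
      have hwA := G.wf_nt A B1 C1 i1 hrA
      have hwB := G.wf_nt B B2 C2 i1 hrB
      constructor
      · omega
      · simp only [CNFTSLP.valFuel, hrA, hrB, hval1, hval2, hrk2]
    · cases hmdt
    · cases hmdt
    · -- both inr
      injection hmdt with h1
      injection h1 with h1
      subst h1
      have hwA := G.wf_t A f1 hrA
      have hwB := G.wf_t B f1 hrB
      refine ⟨by omega, ?_⟩
      simp only [CNFTSLP.valFuel, hrA, hrB]

end Aux

/-- If the subtrees of the modified derivation tree rooted
at the nodes corresponding to two (nonterminal-labelled) nodes of the
derivation tree, labelled `A` and `B`, are isomorphic as labelled ordered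
trees (the subtree of the modified derivation tree below a node of the
derivation tree labelled `A` being `G.mdt A`), then `A` and `B` derive the
same valid pattern. -/
theorem mdt_eq_imp_val_eq {L : Type} {rkL : L → ℕ} (G : CNFTSLP L rkL)
    (A B : Fin G.N) (hA : G.Reachable A) (hB : G.Reachable B)
    (h : G.mdt A = G.mdt B) : G.valN A = G.valN B :=
  (main_aux G.N A B (complete_N A) (complete_N B) h).2
end

section
/- Let r ≥ 1 and k ≥ 1, and let t be a rooted ordered tree in which every node has at most r children, equipped with a weight function w assigning to every node v a weight w(v) ≥ 1 with total weight Σ_v w(v) ≤ 2n. Suppose that for every non-root node v of t with at most one child, w(v) > k or w(u) > k, where u is the parent of v. Then the number of nodes of t is at most 4·r·n/k + 2. -/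
universe u v

namespace RTree

/-- The depth of a tree: the maximal number of edges on a path from the root
to a leaf. -/
def depth {L : Type u} : RTree L → ℕ
  | .node _ ts => (ts.attach.map (fun x => x.1.depth + 1)).foldr max 0
termination_by t => sizeOf t
decreasing_by simp_wf; have := List.sizeOf_lt_of_mem x.2; omega

/-- `Subtree s t` holds iff `s` is the subtree of `t` rooted at some node
of `t`. -/
inductive Subtree {L : Type u} : RTree L → RTree L → Prop
  | refl (t : RTree L) : Subtree t t
  | child {s t : RTree L} {f : L} {ts : List (RTree L)} :
      t ∈ ts → Subtree s t → Subtree s (.node f ts)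

end RTree

namespace RTree

/-- The subtree of `t` rooted at the node addressed by the position `p`
(a list of child indices), if `p` is a valid position in `t`. -/
def subtAt {L : Type u} : RTree L → List ℕ → Option (RTree L)
  | t, [] => some t
  | .node _ ts, i :: p =>
    match ts[i]? with
    | some s => s.subtAt p
    | none => none
termination_by _ p => p.length

end RTree


namespace RTree

/-- number of nodes with at most one child -/
def c1 {L : Type u} : RTree L → ℕ
  | .node _ ts => (if ts.length ≤ 1 then 1 else 0) + (ts.attach.map (fun x => x.1.c1)).sum
termination_by t => sizeOf t
decreasing_by simp_wf; have := List.sizeOf_lt_of_mem x.2; omega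

/-- number of heavy nodes (label > k) -/
def hvy (k : ℕ) : RTree ℕ → ℕ
  | .node w ts => (if k < w then 1 else 0) + (ts.attach.map (fun x => hvy k x.1)).sum
termination_by t => sizeOf t
decreasing_by simp_wf; have := List.sizeOf_lt_of_mem x.2; omega

/-- root penalty -/
def pen (k : ℕ) : RTree ℕ → ℕ
  | .node w ts => if ts.length ≤ 1 ∧ w ≤ k then 1 else 0

theorem attach_sum {L : Type u} (ts : List (RTree L)) (f : RTree L → ℕ) :
    (ts.attach.map (fun x => f x.1)).sum = (ts.map f).sum := by
  simp [List.attach_map_val]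

theorem size_node {L : Type u} (w : L) (ts : List (RTree L)) :
    size (.node w ts) = 1 + (ts.map size).sum := by
  rw [size, attach_sum]

theorem c1_node {L : Type u} (w : L) (ts : List (RTree L)) :
    c1 (.node w ts) = (if ts.length ≤ 1 then 1 else 0) + (ts.map c1).sum := by
  rw [c1, attach_sum]

theorem hvy_node (k w : ℕ) (ts : List (RTree ℕ)) :
    hvy k (.node w ts) = (if k < w then 1 else 0) + (ts.map (hvy k)).sum := by
  rw [hvy, attach_sum]

theorem labels_sum_node (w : ℕ) (ts : List (RTree ℕ)) :
    (labelsList (.node w ts)).sum = w + (ts.map (fun s => s.labelsList.sum)).sum := by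
  rw [labelsList]
  simp only [List.sum_cons, List.sum_flatten, List.map_map, List.attach_map_val]
  rfl

theorem subtAt_nil {L : Type u} (t : RTree L) : t.subtAt [] = some t := by
  rw [subtAt]

theorem sum_map_add {L : Type u} (l : List L) (f g : L → ℕ) :
    (l.map (fun s => f s + g s)).sum = (l.map f).sum + (l.map g).sum := by
  induction l with
  | nil => simp
  | cons a l ih => simp only [List.map_cons, List.sum_cons, ih]; ring

theorem pen_node (k w : ℕ) (ts : List (RTree ℕ)) :
    pen k (.node w ts) = if ts.length ≤ 1 ∧ w ≤ k then 1 else 0 := rfl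

theorem subtAt_cons {L : Type u} {w : L} {ts : List (RTree L)} {i : ℕ} {s : RTree L}
    (h : ts[i]? = some s) (p : List ℕ) :
    subtAt (.node w ts) (i :: p) = s.subtAt p := by
  rw [subtAt, h]

/-- Lemma A: size + 1 ≤ 2 * c1 -/
theorem size_le_c1 {L : Type u} : ∀ t : RTree L, size t + 1 ≤ 2 * c1 t
  | .node w ts => by
    have IH : ∀ s ∈ ts, size s + 1 ≤ 2 * c1 s := fun s hs => size_le_c1 s
    have hsum : (ts.map (fun s => size s + 1)).sum ≤ (ts.map (fun s => 2 * c1 s)).sum :=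
      List.sum_le_sum IH
    have h1 : (ts.map (fun s => size s + 1)).sum = (ts.map size).sum + ts.length := by
      induction ts with
      | nil => simp
      | cons a l ih => simp [ih]; omega
    have h2 : (ts.map (fun s => 2 * c1 s)).sum = 2 * (ts.map c1).sum := by
      simpa using List.sum_map_mul_left ts c1 2
    rw [size_node, c1_node]
    rcases le_or_gt ts.length 1 with h | h
    · simp only [if_pos h]; omega
    · simp only [if_neg (by omega : ¬ ts.length ≤ 1)]; omega
termination_by t => sizeOf t
decreasing_by simp_wf; have := List.sizeOf_lt_of_mem hs; omega

/-- if every node has ≤ 1 child then size = c1 -/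
theorem size_eq_c1 {L : Type u} : ∀ t : RTree L,
    (∀ (p : List ℕ) (w : L) (us : List (RTree L)),
      t.subtAt p = some (.node w us) → us.length ≤ 1) →
    size t = c1 t
  | .node w ts => fun h => by
    have hroot : ts.length ≤ 1 := h [] w ts (subtAt_nil _)
    have IH : ∀ s ∈ ts, size s = c1 s := by
      intro s hs
      obtain ⟨i, hi⟩ := List.mem_iff_getElem?.1 hs
      refine size_eq_c1 s (fun p w' us hp => h (i :: p) w' us ?_)
      rw [subtAt_cons hi]; exact hp
    rw [size_node, c1_node, if_pos hroot, List.map_congr_left IH]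
termination_by t => sizeOf t
decreasing_by simp_wf; have := List.sizeOf_lt_of_mem hs; omega

/-- weight bound on heavy count -/
theorem hvy_le_sum (k : ℕ) : ∀ t : RTree ℕ, (k + 1) * hvy k t ≤ t.labelsList.sum
  | .node w ts => by
    have IH : ∀ s ∈ ts, (k + 1) * hvy k s ≤ s.labelsList.sum := fun s hs => hvy_le_sum k s
    have hsum : (ts.map (fun s => (k+1) * hvy k s)).sum ≤ (ts.map (fun s => s.labelsList.sum)).sum :=
      List.sum_le_sum IH
    have h2 : (ts.map (fun s => (k+1) * hvy k s)).sum = (k+1) * (ts.map (hvy k)).sum := by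
      simpa using List.sum_map_mul_left ts (hvy k) (k+1)
    rw [labels_sum_node, hvy_node]
    have e1 : (k+1) * (1 + (ts.map (hvy k)).sum) = (k+1) + (k+1) * (ts.map (hvy k)).sum := by ring
    have e2 : (k+1) * (0 + (ts.map (hvy k)).sum) = (k+1) * (ts.map (hvy k)).sum := by ring
    rcases Nat.lt_or_ge k w with h | h
    · rw [if_pos h, e1]; omega
    · rw [if_neg (by omega), e2]; omega
termination_by t => sizeOf t
decreasing_by simp_wf; have := List.sizeOf_lt_of_mem hs; omega

/-- Lemma B -/
theorem c1_le_hvy (k M : ℕ) (hM : 2 ≤ M) : ∀ t : RTree ℕ,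
    (∀ (p : List ℕ) (w : ℕ) (us : List (RTree ℕ)),
      t.subtAt p = some (.node w us) → us.length ≤ M) →
    (∀ (p : List ℕ) (i w : ℕ) (us : List (RTree ℕ)),
      t.subtAt (p ++ [i]) = some (.node w us) → us.length ≤ 1 →
      k < w ∨ ∃ (wu : ℕ) (vs : List (RTree ℕ)),
        t.subtAt p = some (.node wu vs) ∧ k < wu) →
    c1 t ≤ M * hvy k t + pen k t
  | .node w ts => fun harity hmerged => by
    have IH : ∀ s ∈ ts, c1 s ≤ M * hvy k s + pen k s := by
      intro s hs
      obtain ⟨i, hi⟩ := List.mem_iff_getElem?.1 hs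
      refine c1_le_hvy k M hM s (fun p w' us hp => harity (i :: p) w' us ?_)
        (fun p j w' us hp hlen => ?_)
      · rw [subtAt_cons hi]; exact hp
      · have := hmerged (i :: p) j w' us (by rw [List.cons_append, subtAt_cons hi]; exact hp) hlen
        rcases this with h | ⟨wu, vs, hq, hwu⟩
        · exact Or.inl h
        · exact Or.inr ⟨wu, vs, by rw [subtAt_cons hi] at hq; exact hq, hwu⟩
    -- each child with pen = 1 forces the root heavy
    have hpen : ∀ s ∈ ts, pen k s = 1 → k < w := by
      intro s hs hp
      obtain ⟨i, hi⟩ := List.mem_iff_getElem?.1 hs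
      obtain ⟨ws, us⟩ := s
      rw [pen_node] at hp
      by_contra hkw
      split at hp
      · rename_i hcond
        have := hmerged [] i ws us
          (by rw [List.nil_append, subtAt_cons hi, subtAt_nil]) hcond.1
        rcases this with h | ⟨wu, vs, hq, hwu⟩
        · omega
        · rw [subtAt_nil] at hq
          injection hq with hq'; injection hq' with h1 h2
          omega
      · omega
    have hsum : (ts.map c1).sum ≤ (ts.map (fun s => M * hvy k s + pen k s)).sum :=
      List.sum_le_sum IH
    have h2 : (ts.map (fun s => M * hvy k s + pen k s)).sum
        = M * (ts.map (hvy k)).sum + (ts.map (pen k)).sum := by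
      rw [sum_map_add]
      congr 1
      simpa using List.sum_map_mul_left ts (hvy k) M
    have hlen : ts.length ≤ M := harity [] w ts (subtAt_nil _)
    rw [c1_node, hvy_node, pen_node]
    have e1 : M * (1 + (ts.map (hvy k)).sum) = M + M * (ts.map (hvy k)).sum := by ring
    have e2 : M * (0 + (ts.map (hvy k)).sum) = M * (ts.map (hvy k)).sum := by ring
    rcases Nat.lt_or_ge k w with hh | hh
    · -- heavy root
      have hP : (ts.map (pen k)).sum ≤ ts.length := by
        calc (ts.map (pen k)).sum ≤ (ts.map (fun _ => 1)).sum :=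
              List.sum_le_sum (fun s hs => by obtain ⟨ws, us⟩ := s; rw [pen_node]; split <;> omega)
          _ = ts.length := by simp
      split_ifs <;> omega
    · -- light root: all pens are 0
      have hP : (ts.map (pen k)).sum = 0 := by
        apply List.sum_eq_zero
        intro x hx
        simp only [List.mem_map] at hx
        obtain ⟨s, hs, rfl⟩ := hx
        by_contra hne
        have : pen k s = 1 := by
          obtain ⟨ws, us⟩ := s
          rw [pen_node] at hne ⊢; split_ifs at hne ⊢ <;> omega
        exact absurd (hpen s hs this) (by omega)
      split_ifs <;> omega
termination_by t => sizeOf t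
decreasing_by all_goals (simp_wf; have := List.sizeOf_lt_of_mem hs; omega)

theorem pen_le_one (k : ℕ) (t : RTree ℕ) : pen k t ≤ 1 := by
  obtain ⟨w, ts⟩ := t; rw [pen_node]; split <;> omega


end RTree

/-- the combinatorial content of the size bound for the
pattern tree produced by BU-Shrink.  Here a node-weighted rooted ordered tree
is modelled as a tree whose labels are the weights:  `t : RTree ℕ`, the weight
of a node being its label.  If every node has at most `r` children, every
weight is at least `1`, the total weight is at most `2n`, and every non-root
node `v` with at most one child satisfies `w(v) > k` or `w(parent v) > k`,
then `t` has at most `4·r·n/k + 2` nodes. -/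
theorem pattern_tree_size_le (r k n : ℕ) (hr : 1 ≤ r) (hk : 1 ≤ k)
    (t : RTree ℕ)
    (harity : ∀ (p : List ℕ) (w : ℕ) (ts : List (RTree ℕ)),
      t.subtAt p = some (.node w ts) → ts.length ≤ r)
    (hw : ∀ w ∈ t.labelsList, 1 ≤ w)
    (hsum : (t.labelsList).sum ≤ 2 * n)
    (hmerged : ∀ (p : List ℕ) (i w : ℕ) (ts : List (RTree ℕ)),
      t.subtAt (p ++ [i]) = some (.node w ts) → ts.length ≤ 1 →
      k < w ∨ ∃ (wu : ℕ) (us : List (RTree ℕ)),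
        t.subtAt p = some (.node wu us) ∧ k < wu) :
    (t.size : ℝ) ≤ 4 * (r : ℝ) * (n : ℝ) / (k : ℝ) + 2 := by
    classical
  set M := max r 2 with hMdef
  have hM : 2 ≤ M := le_max_right r 2
  have harity' : ∀ (p : List ℕ) (w : ℕ) (ts : List (RTree ℕ)),
      t.subtAt p = some (.node w ts) → ts.length ≤ M :=
    fun p w ts h => le_trans (harity p w ts h) (le_max_left r 2)
  have hb : t.c1 ≤ M * RTree.hvy k t + 1 := by
    have := RTree.c1_le_hvy k M hM t harity' hmerged
    have hp := RTree.pen_le_one k t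
    omega
  have hsize : t.size ≤ 2 * r * RTree.hvy k t + 1 := by
    rcases Nat.lt_or_ge r 2 with hr2 | hr2
    · have hr1 : r = 1 := by omega
      have hceq : t.size = t.c1 :=
        RTree.size_eq_c1 t (fun p w' us h => by have := harity p w' us h; omega)
      have hMeq : M = 2 := by rw [hMdef]; omega
      rw [hMeq] at hb
      have he : 2 * r * RTree.hvy k t = 2 * RTree.hvy k t := by rw [hr1]
      omega
    · have hMeq : M = r := by rw [hMdef]; omega
      rw [hMeq] at hb
      have hA := RTree.size_le_c1 t
      have he : 2 * r * RTree.hvy k t = 2 * (r * RTree.hvy k t) := by ring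
      omega
  have hkv : k * RTree.hvy k t ≤ 2 * n := by
    have := RTree.hvy_le_sum k t
    have h1 : k * RTree.hvy k t ≤ (k + 1) * RTree.hvy k t :=
      Nat.mul_le_mul_right _ (by omega)
    omega
  have hk0 : (0 : ℝ) < (k : ℝ) := by exact_mod_cast hk
  have hs : (t.size : ℝ) ≤ 2 * (r : ℝ) * (RTree.hvy k t : ℝ) + 1 := by exact_mod_cast hsize
  have hv : (k : ℝ) * (RTree.hvy k t : ℝ) ≤ 2 * (n : ℝ) := by exact_mod_cast hkv
  have hr0 : (0 : ℝ) ≤ (r : ℝ) := by positivity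
  have key : (t.size : ℝ) * (k : ℝ) ≤ 4 * (r : ℝ) * (n : ℝ) + 2 * (k : ℝ) := by
    nlinarith [mul_le_mul_of_nonneg_left hv (by positivity : (0:ℝ) ≤ 2 * (r:ℝ)),
      mul_le_mul_of_nonneg_right hs (le_of_lt hk0)]
  have heq : 4 * (r : ℝ) * (n : ℝ) / (k : ℝ) + 2 = (4 * (r:ℝ) * n + 2 * k) / k := by
    field_simp
  rw [heq, le_div_iff₀ hk0]
  linarith [key]
end
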